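/- Assume the trace class condition ∑_{n≥0}(|a_n - 1/2| + |b_n|) < ∞. Let ζ ∈ ℂ with 0 < |ζ| ≤ 1, ζ ∉ {1, -1}, set z = (ζ + ζ⁻¹)/2, and let f = (f_n)_{n≥-1} be a solution of the Jacobi equation at z with f_n ζ^{-n} → 1. Then the series ∑_{n≥0} ζ^{n+1} (VP(z))_n converges absolutely and ζ f_{-1} = 1 - 2 ∑_{n=0}^{∞} ζ^{n+1} (VP(z))_n, where (VP(z))_n = (a_{n-1} - 1/2) P_{n-1}(z) + b_n P_n(z) + (a_n - 1/2) P_{n+1}(z) with a_{-1} = 1/2 and P_{-1}(z) = 0. -/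

import Mathlib

/-!
The Jacobi equation is the free equation (`a ≡ 1/2`, `b ≡ 0`) perturbed by `V`. Free solutions
are Chebyshev values `U n (z)`, and `ζ ^ n U n (z) = ∑_{i ≤ n} ζ ^ (2 i)` is bounded by
`2 / ‖ζ² - 1‖` when `‖ζ‖ ≤ 1`. Variation of constants expresses `P` through `U` and `VP`; since
the coefficients of `V` are summable, a discrete Gronwall argument keeps `ζ ^ n P n` bounded,
which gives absolute convergence of the series. Summation by parts turns its partial sums into
`1 - ζ ^ (N+1) P (N+1) + ζ ^ (N+2) P N`, while constancy of the Wronskian of `f` and `P` gives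
`ζ f (-1) = 2 a N ζ (f N P (N+1) - f (N+1) P N)`. Letting `N → ∞`, with `a N → 1/2` and
`f N ~ ζ ^ N`, identifies the two.
-/

open Filter Finset MeasureTheory

noncomputable section

/-- Extended coefficient sequence with `a₋₁ = 1/2`. -/
def aext (a : ℕ → ℝ) : ℤ → ℝ := fun k => if k < 0 then 1/2 else a k.toNat

/-- `u : ℤ → ℂ` (restricted to indices `n ≥ -1`) solves the Jacobi equation
`a_{n-1} u_{n-1} + b_n u_n + a_n u_{n+1} = z u_n` for all `n ≥ 0`, with `a_{-1} = 1/2`. -/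
def IsJacobiSol (a b : ℕ → ℝ) (z : ℂ) (u : ℤ → ℂ) : Prop :=
  ∀ n : ℕ, (aext a ((n : ℤ) - 1) : ℂ) * u ((n : ℤ) - 1) + (b n : ℂ) * u (n : ℤ)
      + (a n : ℂ) * u ((n : ℤ) + 1) = z * u (n : ℤ)

/-- The perturbation `V = H - H₀` applied to a sequence:
`(Vf)_m = (a_{m-1} - 1/2) f_{m-1} + b_m f_m + (a_m - 1/2) f_{m+1}` with `a_{-1} = 1/2`. -/
def jV (a b : ℕ → ℝ) (f : ℤ → ℂ) (m : ℕ) : ℂ :=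
  ((aext a ((m : ℤ) - 1) - 1/2 : ℝ) : ℂ) * f ((m : ℤ) - 1) + (b m : ℂ) * f (m : ℤ)
    + ((a m - 1/2 : ℝ) : ℂ) * f ((m : ℤ) + 1)

open Polynomial Topology

namespace Polynomial.Chebyshev

variable {R : Type*} [CommRing R]

theorem pow_mul_eval_U_eq_geom_sum {x ζ : R} (hx : 2 * x * ζ = ζ ^ 2 + 1) (n : ℕ) :
    ζ ^ n * (U R n).eval x = ∑ i ∈ range (n + 1), (ζ ^ 2) ^ i := by
  induction n using Nat.twoStepInduction with
  | zero => simp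
  | one =>
    simp only [Nat.cast_one, U_one, eval_mul, eval_ofNat, eval_X, sum_range_succ, range_one,
      sum_singleton, pow_zero, pow_one]
    linear_combination hx
  | more n ih₀ ih₁ =>
    have hU : (U R ((n + 2 : ℕ) : ℤ)).eval x
        = 2 * x * (U R ((n + 1 : ℕ) : ℤ)).eval x - (U R n).eval x := by
      push_cast; simp [U_add_two]
    rw [hU]
    simp only [sum_range_succ] at ih₀ ih₁ ⊢
    linear_combination ζ ^ (n + 1) * (U R ((n + 1 : ℕ) : ℤ)).eval x * hx - ζ ^ 2 * ih₀
      + (ζ ^ 2 + 1) * ih₁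

/-- Variation of constants: `U (n - 1 - m) (x)` is the Green kernel of the free recurrence. -/
theorem eq_eval_U_add_sum_of_recurrence {x : R} {y : ℤ → R} {g : ℕ → R}
    (hy_neg_one : y (-1) = 0) (hy_zero : y 0 = 1)
    (hy : ∀ n : ℕ, y (n + 1) = 2 * x * y n - y (n - 1) + g n) (n : ℕ) :
    y n = (U R n).eval x + ∑ m ∈ range n, (U R ((n : ℤ) - 1 - m)).eval x * g m := by
  set D : ℕ → R := fun n =>
    (U R n).eval x + ∑ m ∈ range n, (U R ((n : ℤ) - 1 - m)).eval x * g m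
  have hD : ∀ n : ℕ, D (n + 2) = 2 * x * D (n + 1) - D n + g (n + 1) := by
    intro n
    have hkernel : ∀ m ∈ range (n + 1), (U R ((n + 2 : ℕ) - 1 - m : ℤ)).eval x * g m
        = 2 * x * ((U R ((n + 1 : ℕ) - 1 - m : ℤ)).eval x * g m)
          - (U R ((n : ℤ) - 1 - m)).eval x * g m := by
      intro m _
      push_cast
      rw [show (n : ℤ) + 2 - 1 - m = (n - 1 - m) + 2 by ring,
        show (n : ℤ) + 1 - 1 - m = (n - 1 - m) + 1 by ring, U_add_two]
      simp only [eval_sub, eval_mul, eval_X, eval_ofNat]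
      ring
    simp only [D, sum_range_succ _ (n + 1), sum_congr rfl hkernel, sum_sub_distrib, ← mul_sum]
    rw [sum_range_succ (fun m : ℕ => (U R ((n : ℤ) - 1 - m)).eval x * g m) n]
    push_cast
    simp only [show (n : ℤ) - 1 - n = -1 by ring, show (n : ℤ) + 2 - 1 - (n + 1) = 0 by ring,
      U_neg_one, U_zero, U_add_two, eval_sub, eval_mul, eval_X, eval_ofNat, eval_zero, eval_one]
    ring
  suffices h : ∀ n : ℕ, y n = D n ∧ y (n + 1) = D (n + 1) from (h n).1
  intro n
  induction n with
  | zero =>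
    have h := hy 0
    simp only [CharP.cast_eq_zero, zero_add, zero_sub, hy_zero, hy_neg_one] at h
    simp [D, h, hy_zero]
  | succ n ih =>
    refine ⟨ih.2, ?_⟩
    have h := hy (n + 1)
    push_cast at h ⊢
    rw [add_sub_cancel_right, ih.1, ih.2] at h
    rw [h, hD]

theorem norm_pow_mul_eval_U_le {𝕜 : Type*} [NormedField 𝕜] {x ζ : 𝕜}
    (hζ : ‖ζ‖ ≤ 1) (hζ2 : ζ ^ 2 ≠ 1) (hx : 2 * x * ζ = ζ ^ 2 + 1) (n : ℕ) :
    ‖ζ ^ n * (U 𝕜 n).eval x‖ ≤ 2 / ‖ζ ^ 2 - 1‖ := by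
  rw [pow_mul_eval_U_eq_geom_sum hx, geom_sum_eq hζ2, norm_div]
  gcongr
  calc ‖(ζ ^ 2) ^ (n + 1) - 1‖ ≤ ‖(ζ ^ 2) ^ (n + 1)‖ + ‖(1 : 𝕜)‖ := norm_sub_le _ _
    _ ≤ 1 + 1 := by
      rw [norm_one, norm_pow, norm_pow]
      gcongr
      exact pow_le_one₀ (pow_nonneg (norm_nonneg _) _) (pow_le_one₀ (norm_nonneg _) hζ)
    _ = 2 := by norm_num

end Polynomial.Chebyshev

theorem Summable.exists_forall_sum_Ico_le {w : ℕ → ℝ} (hw : 0 ≤ w) (hws : Summable w)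
    {ε : ℝ} (hε : 0 < ε) : ∃ N, ∀ n, ∑ m ∈ Ico N n, w m ≤ ε := by
  obtain ⟨N, hN⟩ := ((tendsto_sum_nat_add w).eventually (gt_mem_nhds hε)).exists
  refine ⟨N, fun n => ?_⟩
  rw [sum_Ico_eq_sum_range]
  calc ∑ k ∈ range (n - N), w (N + k) = ∑ k ∈ range (n - N), w (k + N) := by
        simp_rw [add_comm]
    _ ≤ ∑' k, w (k + N) :=
      (hws.comp_injective (add_left_injective N)).sum_le_tsum _ fun k _ => hw _
    _ ≤ ε := hN.le

/-- A discrete Gronwall inequality in which the right-hand side at `n` may involve the running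
maximum up to `n` itself. -/
theorem exists_forall_le_of_le_add_sum_mul_partialSups {u w : ℕ → ℝ} {D₁ D₂ : ℝ}
    (hu : 0 ≤ u) (hw : 0 ≤ w) (hws : Summable w) (hD₂ : 0 ≤ D₂)
    (h : ∀ n, u n ≤ D₁ + D₂ * ∑ m ∈ range n, w m * partialSups u (m + 1)) :
    ∃ C, ∀ n, u n ≤ C := by
  set M := partialSups u
  have hM0 : ∀ n, 0 ≤ M n := fun n => (hu n).trans (le_partialSups u n)
  have hM : ∀ n, M n ≤ D₁ + D₂ * ∑ m ∈ range n, w m * M (m + 1) := fun n =>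
    partialSups_le _ _ _ fun j hj => (h j).trans <| by
      gcongr _ + _ * ?_
      exact sum_le_sum_of_subset_of_nonneg (range_mono hj) fun m _ _ =>
        mul_nonneg (hw m) (hM0 _)
  obtain ⟨N, hN⟩ := (hws.mul_left D₂).exists_forall_sum_Ico_le
    (fun m => mul_nonneg hD₂ (hw m)) one_half_pos
  set A := D₁ + D₂ * ∑ m ∈ range N, w m * M (m + 1)
  -- Beyond `N` the tail of `w` is small enough to absorb the implicit term `M n` on the right.
  have hMN : ∀ n, N ≤ n → M n ≤ 2 * A := by
    intro n hn
    have : M n ≤ A + 1 / 2 * M n := calc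
      M n ≤ D₁ + D₂ * ∑ m ∈ range n, w m * M (m + 1) := hM n
      _ = A + D₂ * ∑ m ∈ Ico N n, w m * M (m + 1) := by
        rw [← sum_range_add_sum_Ico _ hn]; ring
      _ ≤ A + D₂ * ∑ m ∈ Ico N n, w m * M n := by
        gcongr with m hm
        · exact hw m
        · simp only [mem_Ico] at hm; omega
      _ = A + (∑ m ∈ Ico N n, D₂ * w m) * M n := by rw [← mul_sum, ← sum_mul, mul_assoc]
      _ ≤ A + 1 / 2 * M n := by gcongr; exacts [hM0 n, hN n]
    linarith
  exact ⟨2 * A, fun n => (le_partialSups u n).trans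
    ((M.monotone (le_max_left n N)).trans (hMN _ (le_max_right n N)))⟩

theorem aext_neg_one (a : ℕ → ℝ) : aext a (-1) = 1 / 2 := by simp [aext]

@[simp]
theorem aext_natCast (a : ℕ → ℝ) (n : ℕ) : aext a n = a n := by simp [aext]

/-- The `ℓ¹`-norm of the `m`-th row of `V = H - H₀`. -/
def perturbationWeight (a b : ℕ → ℝ) (m : ℕ) : ℝ :=
  |aext a ((m : ℤ) - 1) - 1 / 2| + |b m| + |a m - 1 / 2|

def jacobiWronskian (a : ℕ → ℝ) (u v : ℤ → ℂ) (n : ℤ) : ℂ :=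
  aext a n * (u n * v (n + 1) - u (n + 1) * v n)

section Jacobi

variable {a b : ℕ → ℝ} {z ζ : ℂ} {u v : ℤ → ℂ}

theorem perturbationWeight_nonneg (a b : ℕ → ℝ) (m : ℕ) : 0 ≤ perturbationWeight a b m := by
  unfold perturbationWeight; positivity

theorem summable_perturbationWeight (htr : Summable fun n : ℕ => |a n - 1 / 2| + |b n|) :
    Summable (perturbationWeight a b) := by
  have ha : Summable fun m : ℕ => |a m - 1 / 2| :=
    htr.of_nonneg_of_le (fun _ => abs_nonneg _) fun _ => le_add_of_nonneg_right (abs_nonneg _)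
  have hb : Summable fun m : ℕ => |b m| :=
    htr.of_nonneg_of_le (fun _ => abs_nonneg _) fun _ => le_add_of_nonneg_left (abs_nonneg _)
  have ha' : Summable fun m : ℕ => |aext a ((m : ℤ) - 1) - 1 / 2| :=
    (summable_nat_add_iff 1).mp (by simpa using ha)
  exact (ha'.add hb).add ha

theorem norm_pow_succ_mul_jV_le (hζ : ‖ζ‖ ≤ 1) (u : ℤ → ℂ) (m : ℕ) :
    ‖ζ ^ (m + 1) * jV a b u m‖
      ≤ perturbationWeight a b m * partialSups (fun n : ℕ => ‖ζ ^ n * u n‖) (m + 1) := by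
  set M := partialSups (fun n : ℕ => ‖ζ ^ n * u n‖) (m + 1)
  have hterm (r : ℝ) (i j : ℕ) (hj : j ≤ m + 1) :
      ‖(r : ℂ) * ζ ^ i * (ζ ^ j * u j)‖ ≤ |r| * M := by
    rw [norm_mul, norm_mul, Complex.norm_real, Real.norm_eq_abs, norm_pow]
    have hM : ‖ζ ^ j * u j‖ ≤ M := le_partialSups_of_le (fun n : ℕ => ‖ζ ^ n * u n‖) hj
    have hζi : ‖ζ‖ ^ i ≤ 1 := pow_le_one₀ (norm_nonneg _) hζ
    calc |r| * ‖ζ‖ ^ i * ‖ζ ^ j * u j‖ ≤ |r| * 1 * M := by gcongr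
      _ = |r| * M := by rw [mul_one]
  cases m with
  | zero =>
    have h : ζ ^ (0 + 1) * jV a b u 0 = (b 0 : ℂ) * ζ ^ 1 * (ζ ^ 0 * u (0 : ℕ))
        + ((a 0 - 1 / 2 : ℝ) : ℂ) * ζ ^ 0 * (ζ ^ 1 * u (1 : ℕ)) := by
      simp only [jV, Nat.cast_zero, zero_sub, aext_neg_one]; push_cast; ring
    calc ‖ζ ^ (0 + 1) * jV a b u 0‖ ≤ |b 0| * M + |a 0 - 1 / 2| * M :=
          h ▸ (norm_add_le _ _).trans (add_le_add (hterm _ 1 0 (by omega)) (hterm _ 0 1 le_rfl))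
      _ = perturbationWeight a b 0 * M := by
        simp only [perturbationWeight, Nat.cast_zero, zero_sub, aext_neg_one, sub_self, abs_zero,
          zero_add]
        ring
  | succ k =>
    have h : ζ ^ (k + 1 + 1) * jV a b u (k + 1)
        = ((a k - 1 / 2 : ℝ) : ℂ) * ζ ^ 2 * (ζ ^ k * u k)
          + (b (k + 1) : ℂ) * ζ ^ 1 * (ζ ^ (k + 1) * u (k + 1 : ℕ))
          + ((a (k + 1) - 1 / 2 : ℝ) : ℂ) * ζ ^ 0 * (ζ ^ (k + 2) * u (k + 2 : ℕ)) := by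
      simp only [jV]; push_cast; simp only [add_sub_cancel_right, aext_natCast]; ring_nf
    calc ‖ζ ^ (k + 1 + 1) * jV a b u (k + 1)‖
        ≤ |a k - 1 / 2| * M + |b (k + 1)| * M + |a (k + 1) - 1 / 2| * M :=
          h ▸ norm_add₃_le.trans (add_le_add_three (hterm _ 2 k (by omega))
            (hterm _ 1 (k + 1) (by omega)) (hterm _ 0 (k + 2) le_rfl))
      _ = perturbationWeight a b (k + 1) * M := by
        simp only [perturbationWeight, Nat.cast_succ, add_sub_cancel_right, aext_natCast]
        ring

theorem IsJacobiSol.jV_eq (hu : IsJacobiSol a b z u) (n : ℕ) :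
    jV a b u n = z * u n - (u (n - 1) + u (n + 1)) / 2 := by
  have h := hu n
  simp only [jV]
  push_cast at h ⊢
  linear_combination h

theorem IsJacobiSol.eq_eval_U_sub_sum (hu : IsJacobiSol a b z u) (hu_neg_one : u (-1) = 0)
    (hu_zero : u 0 = 1) (n : ℕ) :
    u n = (Chebyshev.U ℂ n).eval z
      - 2 * ∑ m ∈ range n, (Chebyshev.U ℂ ((n : ℤ) - 1 - m)).eval z * jV a b u m := by
  rw [Chebyshev.eq_eval_U_add_sum_of_recurrence (g := fun m => -2 * jV a b u m) hu_neg_one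
    hu_zero (fun m => by rw [hu.jV_eq]; ring) n, mul_sum, sub_eq_add_neg (eval z _),
    ← sum_neg_distrib]
  congr 1
  exact sum_congr rfl fun m _ => by ring

theorem IsJacobiSol.norm_pow_mul_le (hu : IsJacobiSol a b z u) (hu_neg_one : u (-1) = 0)
    (hu_zero : u 0 = 1) (hζ : ‖ζ‖ ≤ 1) (hζ2 : ζ ^ 2 ≠ 1) (hz : 2 * z * ζ = ζ ^ 2 + 1)
    (n : ℕ) :
    ‖ζ ^ n * u n‖
      ≤ 2 / ‖ζ ^ 2 - 1‖ + 4 / ‖ζ ^ 2 - 1‖ * ∑ m ∈ range n, ‖ζ ^ (m + 1) * jV a b u m‖ := by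
  have hU := Chebyshev.norm_pow_mul_eval_U_le hζ hζ2 hz
  have hsplit : ∀ m ∈ range n,
      ζ ^ n * ((Chebyshev.U ℂ ((n : ℤ) - 1 - m)).eval z * jV a b u m)
        = (ζ ^ (n - 1 - m) * (Chebyshev.U ℂ (n - 1 - m : ℕ)).eval z)
          * (ζ ^ (m + 1) * jV a b u m) := by
    intro m hm
    have hmn : m < n := mem_range.mp hm
    rw [show (n : ℤ) - 1 - m = (n - 1 - m : ℕ) by omega,
      show n = (n - 1 - m) + (m + 1) by omega, pow_add]
    simp only [show n - 1 - m + (m + 1) - 1 - m = n - 1 - m by omega]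
    ring
  rw [hu.eq_eval_U_sub_sum hu_neg_one hu_zero, mul_sub, mul_left_comm, mul_sum,
    sum_congr rfl hsplit]
  calc _ ≤ ‖ζ ^ n * (Chebyshev.U ℂ n).eval z‖
        + ‖(2 : ℂ)‖ * ∑ m ∈ range n, ‖ζ ^ (n - 1 - m) * (Chebyshev.U ℂ (n - 1 - m : ℕ)).eval z‖
          * ‖ζ ^ (m + 1) * jV a b u m‖ := by
        refine (norm_sub_le _ _).trans (add_le_add_right ?_ _)
        rw [norm_mul]
        gcongr
        exact (norm_sum_le _ _).trans_eq
          (sum_congr rfl fun m _ => norm_mul (ζ ^ (n - 1 - m) * _) _)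
    _ ≤ 2 / ‖ζ ^ 2 - 1‖
        + 2 * ∑ m ∈ range n, 2 / ‖ζ ^ 2 - 1‖ * ‖ζ ^ (m + 1) * jV a b u m‖ := by
        rw [Complex.norm_two]
        gcongr
        · exact hU n
        · exact hU _
    _ = _ := by rw [← mul_sum]; ring

theorem IsJacobiSol.exists_forall_norm_pow_mul_le
    (htr : Summable fun n : ℕ => |a n - 1 / 2| + |b n|) (hu : IsJacobiSol a b z u)
    (hu_neg_one : u (-1) = 0) (hu_zero : u 0 = 1) (hζ : ‖ζ‖ ≤ 1) (hζ2 : ζ ^ 2 ≠ 1)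
    (hz : 2 * z * ζ = ζ ^ 2 + 1) : ∃ C, ∀ n : ℕ, ‖ζ ^ n * u n‖ ≤ C :=
  exists_forall_le_of_le_add_sum_mul_partialSups (D₂ := 4 / ‖ζ ^ 2 - 1‖)
    (fun _ => norm_nonneg _) (perturbationWeight_nonneg a b) (summable_perturbationWeight htr)
    (by positivity) fun n => (hu.norm_pow_mul_le hu_neg_one hu_zero hζ hζ2 hz n).trans <| by
      gcongr with m
      exact norm_pow_succ_mul_jV_le hζ u m

theorem summable_norm_pow_succ_mul_jV (htr : Summable fun n : ℕ => |a n - 1 / 2| + |b n|)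
    (hζ : ‖ζ‖ ≤ 1) {C : ℝ} (hC : ∀ n : ℕ, ‖ζ ^ n * u n‖ ≤ C) :
    Summable fun n : ℕ => ‖ζ ^ (n + 1) * jV a b u n‖ :=
  ((summable_perturbationWeight htr).mul_right C).of_nonneg_of_le (fun _ => norm_nonneg _)
    fun n => (norm_pow_succ_mul_jV_le hζ u n).trans <|
      mul_le_mul_of_nonneg_left (partialSups_le _ _ _ fun j _ => hC j)
        (perturbationWeight_nonneg a b n)

theorem IsJacobiSol.one_sub_two_mul_sum_pow_mul_jV (hu : IsJacobiSol a b z u)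
    (hu_neg_one : u (-1) = 0) (hu_zero : u 0 = 1) (hz : 2 * z * ζ = ζ ^ 2 + 1) (N : ℕ) :
    1 - 2 * ∑ n ∈ range (N + 1), ζ ^ (n + 1) * jV a b u n
      = ζ ^ (N + 1) * u (N + 1) - ζ ^ (N + 2) * u N := by
  set F : ℕ → ℂ := fun k => ζ ^ k * u k - ζ ^ (k + 1) * u (k - 1)
  have hstep : ∀ n : ℕ, 2 * (ζ ^ (n + 1) * jV a b u n) = -(F (n + 1) - F n) := by
    intro n
    simp only [F, hu.jV_eq]
    push_cast
    rw [add_sub_cancel_right]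
    linear_combination ζ ^ n * u n * hz
  have hF0 : F 0 = 1 := by simp [F, hu_zero, hu_neg_one]
  rw [mul_sum, sum_congr rfl fun n _ => hstep n, sum_neg_distrib, sum_range_sub, hF0]
  simp only [F]
  push_cast
  ring_nf

theorem IsJacobiSol.jacobiWronskian_natCast_eq (hu : IsJacobiSol a b z u)
    (hv : IsJacobiSol a b z v) (n : ℕ) :
    jacobiWronskian a u v n = jacobiWronskian a u v (-1) := by
  have hstep : ∀ n : ℕ, jacobiWronskian a u v n = jacobiWronskian a u v (n - 1) := by
    intro n
    simp only [jacobiWronskian, aext_natCast, sub_add_cancel]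
    linear_combination u n * hv n - v n * hu n
  induction n with
  | zero => simpa using hstep 0
  | succ n ih => rw [hstep, Nat.cast_succ, add_sub_cancel_right, ih]

end Jacobi

theorem tendsto_mul_casoratian_sub {ζ : ℂ} (hζ : ζ ≠ 0) {f u : ℤ → ℂ}
    (hf : Tendsto (fun n : ℕ => f n * ζ ^ (-(n : ℤ))) atTop (𝓝 1)) {C : ℝ}
    (hC : ∀ n : ℕ, ‖ζ ^ n * u n‖ ≤ C) :
    Tendsto (fun N : ℕ => ζ * (f N * u (N + 1) - f (N + 1) * u N)
      - (ζ ^ (N + 1) * u (N + 1) - ζ ^ (N + 2) * u N)) atTop (𝓝 0) := by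
  set α : ℕ → ℂ := fun n => f n * ζ ^ (-(n : ℤ))
  have hα : Tendsto (fun n => α n - 1) atTop (𝓝 0) := by simpa using hf.sub_const 1
  have hC' : ∀ N : ℕ, ‖ζ ^ (N + 1) * u (N + 1)‖ ≤ C := fun N => by
    exact_mod_cast hC (N + 1)
  have h₁ : Tendsto (fun N : ℕ => (α N - 1) * (ζ ^ (N + 1) * u (N + 1))) atTop (𝓝 0) :=
    hα.zero_mul_isBoundedUnder_le (isBoundedUnder_of ⟨C, hC'⟩)
  have h₂ : Tendsto (fun N : ℕ => (α (N + 1) - 1) * (ζ ^ N * u N) * ζ ^ 2) atTop (𝓝 0) := by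
    simpa using ((hα.comp (tendsto_add_atTop_nat 1)).zero_mul_isBoundedUnder_le
      (isBoundedUnder_of ⟨C, hC⟩)).mul_const (ζ ^ 2)
  have h := h₁.sub h₂
  rw [sub_zero] at h
  refine h.congr fun N => ?_
  simp only [α, zpow_neg, zpow_natCast, Nat.cast_succ]
  field_simp
  ring

theorem jost_function_representation_general
    (a b : ℕ → ℝ)
    (htr : Summable (fun n : ℕ => |a n - 1/2| + |b n|))
    (ζ : ℂ) (hζ0 : 0 < ‖ζ‖) (hζ1 : ‖ζ‖ ≤ 1) (hζp : ζ ≠ 1) (hζm : ζ ≠ -1)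
    (z : ℂ) (hz : z = (ζ + ζ⁻¹) / 2)
    (f : ℤ → ℂ) (hf : IsJacobiSol a b z f)
    (hasym : Filter.Tendsto (fun n : ℕ => f (n : ℤ) * ζ ^ (-(n : ℤ))) Filter.atTop (nhds 1))
    (P : ℤ → ℂ) (hP : IsJacobiSol a b z P) (hPm : P (-1) = 0) (hP0 : P 0 = 1) :
    Summable (fun n : ℕ => ‖ζ ^ (n + 1) * jV a b P n‖) ∧
    ζ * f (-1) = 1 - 2 * ∑' n : ℕ, ζ ^ (n + 1) * jV a b P n := by
  have hζ : ζ ≠ 0 := norm_pos_iff.mp hζ0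
  have hζ2 : ζ ^ 2 ≠ 1 := fun h => (sq_eq_one_iff.mp h).elim hζp hζm
  have hzζ : 2 * z * ζ = ζ ^ 2 + 1 := by rw [hz]; field_simp
  obtain ⟨C, hC⟩ := hP.exists_forall_norm_pow_mul_le htr hPm hP0 hζ1 hζ2 hzζ
  have hsum := summable_norm_pow_succ_mul_jV htr hζ1 hC
  refine ⟨hsum, ?_⟩
  have hW : ∀ N : ℕ, ζ * f (-1) = 2 * (a N : ℂ) * (ζ * (f N * P (N + 1) - f (N + 1) * P N)) := by
    intro N
    have h := hf.jacobiWronskian_natCast_eq hP N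
    simp only [jacobiWronskian, aext_natCast, aext_neg_one, neg_add_cancel, hPm, hP0] at h
    push_cast at h
    linear_combination -2 * ζ * h
  have ha : Tendsto (fun N => 2 * (a N : ℂ)) atTop (𝓝 1) := by
    have h : Tendsto a atTop (𝓝 (1 / 2)) := tendsto_sub_nhds_zero_iff.mp <|
      squeeze_zero_norm (fun n => le_add_of_nonneg_right (abs_nonneg (b n)))
        htr.tendsto_atTop_zero
    simpa using ((Complex.continuous_ofReal.tendsto _).comp h).const_mul 2
  have hS : Tendsto (fun N => 1 - 2 * ∑ n ∈ range (N + 1), ζ ^ (n + 1) * jV a b P n) atTop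
      (𝓝 (1 - 2 * ∑' n : ℕ, ζ ^ (n + 1) * jV a b P n)) :=
    ((hsum.of_norm.hasSum.tendsto_sum_nat.comp (tendsto_add_atTop_nat 1)).const_mul 2).const_sub 1
  have hlim := ha.mul ((tendsto_mul_casoratian_sub hζ hasym hC).add hS)
  rw [one_mul, zero_add] at hlim
  refine tendsto_nhds_unique (tendsto_const_nhds.congr hW) (hlim.congr fun N => ?_)
  rw [hP.one_sub_two_mul_sum_pow_mul_jV hPm hP0 hzζ N]
  ring

/-- representation of the Jost function via the orthogonal
polynomials: `Ω(z) = ζ f_{-1} = 1 - 2 ∑_{n≥0} ζ^{n+1} (VP(z))_n`. -/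
theorem jost_function_representation
    (a b : ℕ → ℝ) (ha : ∀ n, 0 < a n)
    (htr : Summable (fun n : ℕ => |a n - 1/2| + |b n|))
    (ζ : ℂ) (hζ0 : 0 < ‖ζ‖) (hζ1 : ‖ζ‖ ≤ 1) (hζp : ζ ≠ 1) (hζm : ζ ≠ -1)
    (z : ℂ) (hz : z = (ζ + ζ⁻¹) / 2)
    (f : ℤ → ℂ) (hf : IsJacobiSol a b z f)
    (hasym : Filter.Tendsto (fun n : ℕ => f (n : ℤ) * ζ ^ (-(n : ℤ))) Filter.atTop (nhds 1))
    (P : ℤ → ℂ) (hP : IsJacobiSol a b z P) (hPm : P (-1) = 0) (hP0 : P 0 = 1) :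
    Summable (fun n : ℕ => ‖ζ ^ (n + 1) * jV a b P n‖) ∧
    ζ * f (-1) = 1 - 2 * ∑' n : ℕ, ζ ^ (n + 1) * jV a b P n :=
  jost_function_representation_general a b htr ζ hζ0 hζ1 hζp hζm z hz f hf hasym P hP hPm hP0
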